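/- Let f : ℝⁿ → ℝ be three times continuously differentiable with bounded second and third derivatives, m > 0, γ ≥ 0, and fix (x₀, p₀) ∈ ℝⁿ × ℝⁿ. For each h > 0, let (x_h, p_h) : [0, h] → ℝⁿ × ℝⁿ be the solution, with (x_h(0), p_h(0)) = (x₀, p₀), of the modified (shadow) heavy-ball system ẋ = p/m − (hγ/(2m)) p − (h/(2m)) ∇f(x), ṗ = −∇f(x) − γ p − (hγ/2) ∇f(x) + (h/(2m)) ∇²f(x) p. Define one classical-momentum step P_h = e^{−γh} p₀ − h ∇f(x₀), X_h = x₀ + (h/m) P_h. Then the heavy-ball method is a second-order integrator for this shadow system: there exist constants C > 0 and ε > 0 such that for all h ∈ (0, ε], ‖X_h − x_h(h)‖ + ‖P_h − p_h(h)‖ ≤ C h³. -/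

import Mathlib

/-!
Write the shadow vector field on phase space as `F₀ + h • F₁`, where
`F₀ (x, p) = (p / m, -∇f x - γ p)` is the heavy-ball field. Both fields grow at most linearly,
so by Grönwall the solution stays within `O(h)` of `z₀ = (x₀, p₀)` on `[0, h]`. Feeding this back
into the equation and integrating with the mean value inequality gives first
`z(t) = z₀ + t F₀ z₀ + O(h²)`, and then, with the quadratic Taylor remainder of `∇f` controlled by
`D³f`, the expansion `z(h) = z₀ + h (F₀ z₀ + h F₁ z₀) + h²/2 DF₀(z₀) (F₀ z₀) + O(h³)`.
Expanding `exp (-γ h)` to second order shows that one heavy-ball step has the same expansion.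
-/

open Filter Topology Asymptotics Set

/-- The pairs `(h, t)` with `0 ≤ t ≤ h` as `h → 0⁺`: a bound eventually along this filter is a
bound for all small step sizes `h`, uniform in the time `t ∈ [0, h]`. -/
def stepFilter : Filter (ℝ × ℝ) :=
  (𝓝[>] (0 : ℝ)).comap Prod.fst ⊓ 𝓟 {q | q.2 ∈ Icc 0 q.1}

namespace stepFilter

theorem eventually_iff {P : ℝ × ℝ → Prop} :
    (∀ᶠ q in stepFilter, P q) ↔ ∀ᶠ h in 𝓝[>] 0, ∀ t ∈ Icc 0 h, P (h, t) := by
  simp only [stepFilter, eventually_inf_principal, eventually_comap, Prod.forall, mem_ofPred_eq]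
  refine eventually_congr (Eventually.of_forall fun h => ⟨fun H t => H h t rfl, ?_⟩)
  rintro H _ t rfl
  exact H t

theorem tendsto_fst : Tendsto Prod.fst stepFilter (𝓝[>] 0) :=
  tendsto_comap.mono_left inf_le_left

theorem tendsto_diag : Tendsto (fun h : ℝ => (h, h)) (𝓝[>] 0) stepFilter :=
  tendsto_inf.2 ⟨tendsto_comap_iff.2 tendsto_id, tendsto_principal.2 <| by
    filter_upwards [self_mem_nhdsWithin] with h (hh : 0 < h) using ⟨hh.le, le_rfl⟩⟩

theorem isBigO_snd_fst : (Prod.snd : ℝ × ℝ → ℝ) =O[stepFilter] Prod.fst :=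
  IsBigO.of_bound 1 <| eventually_iff.2 <| Eventually.of_forall fun h t ht => by
    simpa [abs_of_nonneg ht.1, abs_of_nonneg (ht.1.trans ht.2)] using ht.2

theorem tendsto_fst_nhds_zero : Tendsto (Prod.fst : ℝ × ℝ → ℝ) stepFilter (𝓝 0) :=
  tendsto_fst.mono_right nhdsWithin_le_nhds

theorem tendsto_snd_nhds_zero : Tendsto (Prod.snd : ℝ × ℝ → ℝ) stepFilter (𝓝 0) :=
  isBigO_snd_fst.trans_tendsto tendsto_fst_nhds_zero

theorem isBigO_fst_pow {m n : ℕ} (hmn : m ≤ n) :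
    (fun q : ℝ × ℝ => q.1 ^ n) =O[stepFilter] fun q => q.1 ^ m := by
  rcases hmn.eq_or_lt with rfl | hlt
  · exact isBigO_refl _ _
  · exact (isLittleO_pow_pow hlt).isBigO.comp_tendsto tendsto_fst_nhds_zero

end stepFilter

theorem isBigO_top_one_add_norm_sub {V W : Type*} [SeminormedAddCommGroup V]
    [SeminormedAddCommGroup W] {g : V → W} {z₀ : V} {K : ℝ}
    (hg : ∀ w, ‖g w - g z₀‖ ≤ K * ‖w - z₀‖) :
    g =O[⊤] fun w => 1 + ‖w - z₀‖ := by
  refine IsBigO.of_bound (‖g z₀‖ + |K|) (Eventually.of_forall fun w => ?_)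
  have hgw := norm_le_norm_add_norm_sub' (g w) (g z₀)
  rw [Real.norm_of_nonneg (by positivity)]
  nlinarith [hg w, le_abs_self K, abs_nonneg K, norm_nonneg (g z₀), norm_nonneg (w - z₀)]

theorem isBigO_top_snd {F G : Type*} [SeminormedAddCommGroup F] [SeminormedAddCommGroup G]
    (z₀ : F × G) : (fun w : F × G => w.2) =O[⊤] fun w => 1 + ‖w - z₀‖ :=
  isBigO_top_one_add_norm_sub (K := 1) fun w => by simpa using norm_snd_le (w - z₀)

section ODE

variable {V : Type*} [NormedAddCommGroup V] [NormedSpace ℝ V]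

theorem isBigO_sub_init_of_norm_deriv_le {z z' : ℝ → ℝ → V} {z₀ : V} {K ε : ℝ}
    (hinit : ∀ h > 0, z h 0 = z₀)
    (hz : ∀ h > 0, ∀ t ∈ Icc 0 h, HasDerivWithinAt (z h) (z' h t) (Icc 0 h) t)
    (hz' : ∀ᶠ h in 𝓝[>] 0, ∀ t ∈ Icc 0 h, ‖z' h t‖ ≤ K * ‖z h t - z₀‖ + ε) :
    (fun q : ℝ × ℝ => z q.1 q.2 - z₀) =O[stepFilter] Prod.fst := by
  have hgronwall : ∀ᶠ q in stepFilter, ‖z q.1 q.2 - z₀‖ ≤ 1 * ‖gronwallBound 0 K ε q.2‖ := by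
    refine stepFilter.eventually_iff.2 ?_
    filter_upwards [hz', self_mem_nhdsWithin] with h hbound (hh : 0 < h) t ht
    have hcont : ContinuousOn (fun s => z h s - z₀) (Icc 0 h) := fun s hs =>
      ((hz h hh s hs).sub_const z₀).continuousWithinAt
    have hderiv : ∀ s ∈ Ico 0 h, HasDerivWithinAt (fun s => z h s - z₀) (z' h s) (Ici s) s :=
      fun s hs => ((hz h hh s (Ico_subset_Icc_self hs)).sub_const z₀).mono_of_mem_nhdsWithin
        (Icc_mem_nhdsGE_of_mem hs)
    have := norm_le_gronwallBound_of_norm_deriv_right_le hcont hderiv (δ := 0)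
      (by simp [hinit h hh]) (fun s hs => hbound s (Ico_subset_Icc_self hs)) t ht
    rw [sub_zero] at this
    exact this.trans (by rw [one_mul]; exact le_abs_self _)
  have hG : (fun s => gronwallBound 0 K ε s) =O[𝓝 0] fun s => s := by
    simpa [gronwallBound_x0] using (hasDerivAt_gronwallBound 0 K ε 0).isBigO_sub
  exact (IsBigO.of_bound 1 hgronwall).trans
    ((hG.comp_tendsto stepFilter.tendsto_snd_nhds_zero).trans stepFilter.isBigO_snd_fst)

theorem isBigO_taylor_of_deriv_sub_isBigO {z z' : ℝ → ℝ → V} {z₀ : V} {a b : ℝ → V} {k : ℕ}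
    (hinit : ∀ h > 0, z h 0 = z₀)
    (hz : ∀ h > 0, ∀ t ∈ Icc 0 h, HasDerivWithinAt (z h) (z' h t) (Icc 0 h) t)
    (hz' : (fun q : ℝ × ℝ => z' q.1 q.2 - a q.1 - q.2 • b q.1) =O[stepFilter]
      fun q => q.1 ^ k) :
    (fun q : ℝ × ℝ => z q.1 q.2 - z₀ - q.2 • a q.1 - (q.2 ^ 2 / 2) • b q.1) =O[stepFilter]
      fun q => q.1 ^ (k + 1) := by
  obtain ⟨c, hc, hcz⟩ := hz'.exists_pos
  refine IsBigO.of_bound c <| stepFilter.eventually_iff.2 ?_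
  filter_upwards [stepFilter.eventually_iff.1 hcz.bound, self_mem_nhdsWithin]
    with h hbound (hh : 0 < h) t ht
  have hderiv : ∀ s ∈ Icc 0 t, HasDerivWithinAt
      (fun s => z h s - z₀ - s • a h - (s ^ 2 / 2) • b h) (z' h s - a h - s • b h) (Icc 0 t) s := by
    intro s hs
    have := (((hz h hh s (Icc_subset_Icc_right ht.2 hs)).mono (Icc_subset_Icc_right ht.2)).sub_const
      z₀).sub ((hasDerivWithinAt_id s _).smul_const (a h)) |>.sub
      (((hasDerivWithinAt_pow 2 s).div_const 2).smul_const (b h))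
    exact this.congr_deriv (by simp)
  have := (convex_Icc 0 t).norm_image_sub_le_of_norm_hasDerivWithin_le hderiv
    (fun s hs => hbound s (Icc_subset_Icc_right ht.2 hs)) (left_mem_Icc.2 ht.1)
    (right_mem_Icc.2 ht.1)
  simp only [hinit h hh, sub_self, zero_smul, ne_eq, OfNat.ofNat_ne_zero, not_false_eq_true,
    zero_pow, zero_div, sub_zero] at this
  calc _ ≤ c * ‖h ^ k‖ * ‖t‖ := this
    _ ≤ c * ‖h ^ k‖ * ‖h‖ := by
      gcongr
      simpa [abs_of_nonneg ht.1, abs_of_nonneg hh.le] using ht.2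
    _ = c * ‖h ^ (k + 1)‖ := by rw [pow_succ, norm_mul, mul_assoc]

variable {F₀ F₁ : V → V} {z₀ : V} {z : ℝ → ℝ → V}

theorem ode_solution_sub_init_isBigO
    (hF₀ : F₀ =O[⊤] fun w => 1 + ‖w - z₀‖) (hF₁ : F₁ =O[⊤] fun w => 1 + ‖w - z₀‖)
    (hinit : ∀ h > 0, z h 0 = z₀)
    (hz : ∀ h > 0, ∀ t ∈ Icc 0 h,
      HasDerivWithinAt (z h) (F₀ (z h t) + h • F₁ (z h t)) (Icc 0 h) t) :
    (fun q : ℝ × ℝ => z q.1 q.2 - z₀) =O[stepFilter] Prod.fst := by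
  obtain ⟨c₀, hc₀⟩ := hF₀.bound
  obtain ⟨c₁, hc₁⟩ := hF₁.bound
  rw [eventually_top] at hc₀ hc₁
  refine isBigO_sub_init_of_norm_deriv_le (K := c₀ + c₁) (ε := c₀ + c₁) hinit hz ?_
  filter_upwards [Ioc_mem_nhdsGT one_pos] with h hh t _
  have hw : ‖(1 : ℝ) + ‖z h t - z₀‖‖ = 1 + ‖z h t - z₀‖ :=
    Real.norm_of_nonneg (by positivity)
  calc ‖F₀ (z h t) + h • F₁ (z h t)‖ ≤ ‖F₀ (z h t)‖ + h * ‖F₁ (z h t)‖ := by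
        grw [norm_add_le, norm_smul, Real.norm_of_nonneg hh.1.le]
    _ ≤ ‖F₀ (z h t)‖ + ‖F₁ (z h t)‖ := by
        gcongr; exact mul_le_of_le_one_left (norm_nonneg _) hh.2
    _ ≤ (c₀ + c₁) * ‖z h t - z₀‖ + (c₀ + c₁) := by
        have := hc₀ (z h t); have := hc₁ (z h t); rw [hw] at *; linarith

theorem ode_solution_sub_taylor_isBigO {F₀' : V →L[ℝ] V}
    (hF₀ : (fun w => F₀ w - F₀ z₀ - F₀' (w - z₀)) =O[𝓝 z₀] fun w => ‖w - z₀‖ ^ 2)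
    (hF₁ : (fun w => F₁ w - F₁ z₀) =O[𝓝 z₀] fun w => w - z₀)
    (hF₀_growth : F₀ =O[⊤] fun w => 1 + ‖w - z₀‖)
    (hF₁_growth : F₁ =O[⊤] fun w => 1 + ‖w - z₀‖)
    (hinit : ∀ h > 0, z h 0 = z₀)
    (hz : ∀ h > 0, ∀ t ∈ Icc 0 h,
      HasDerivWithinAt (z h) (F₀ (z h t) + h • F₁ (z h t)) (Icc 0 h) t) :
    (fun h => z h h - z₀ - h • (F₀ z₀ + h • F₁ z₀) - (h ^ 2 / 2) • F₀' (F₀ z₀))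
      =O[𝓝[>] 0] fun h => h ^ 3 := by
  set ζ : ℝ × ℝ → V := fun q => z q.1 q.2
  have hζ₁ : (fun q => ζ q - z₀) =O[stepFilter] Prod.fst :=
    ode_solution_sub_init_isBigO hF₀_growth hF₁_growth hinit hz
  have hζ : Tendsto ζ stepFilter (𝓝 z₀) :=
    tendsto_sub_nhds_zero_iff.1 (hζ₁.trans_tendsto stepFilter.tendsto_fst_nhds_zero)
  have hF₀ζ : (fun q => F₀ (ζ q) - F₀ z₀ - F₀' (ζ q - z₀)) =O[stepFilter] fun q => q.1 ^ 2 :=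
    (hF₀.comp_tendsto hζ).trans (hζ₁.norm_left.pow 2)
  have hF₁ζ : (fun q => F₁ (ζ q) - F₁ z₀) =O[stepFilter] Prod.fst :=
    (hF₁.comp_tendsto hζ).trans hζ₁
  have hζ₂ : (fun q => ζ q - z₀ - q.2 • F₀ z₀) =O[stepFilter] fun q => q.1 ^ 2 := by
    have hF₁_bdd : (fun q => F₁ (ζ q)) =O[stepFilter] fun _ => (1 : ℝ) :=
      (tendsto_sub_nhds_zero_iff.1 (hF₁ζ.trans_tendsto
        stepFilter.tendsto_fst_nhds_zero)).isBigO_one ℝ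
    have hrem : (fun q => F₀ (ζ q) + q.1 • F₁ (ζ q) - F₀ z₀ - q.2 • (0 : V))
        =O[stepFilter] fun q => q.1 ^ 1 := by
      refine ((hF₀ζ.trans (stepFilter.isBigO_fst_pow one_le_two)).add
        ((F₀'.isBigO_comp _ _).trans hζ₁ |>.congr_right fun q => (pow_one q.1).symm)
        |>.add ((isBigO_refl Prod.fst _).smul hF₁_bdd |>.congr_right fun q => by simp))
        |>.congr_left fun q => ?_
      simp only [smul_zero, sub_zero]
      abel
    simpa using isBigO_taylor_of_deriv_sub_isBigO (a := fun _ => F₀ z₀) (b := fun _ => 0)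
      hinit hz hrem
  -- The remainder splits as the Taylor remainder of `F₀` at `z₀`, plus `F₀'` applied to the
  -- first-order error `hζ₂`, plus `h • (F₁ ζ - F₁ z₀)`.
  have hrem : (fun q => F₀ (ζ q) + q.1 • F₁ (ζ q) - (F₀ z₀ + q.1 • F₁ z₀) - q.2 • F₀' (F₀ z₀))
      =O[stepFilter] fun q => q.1 ^ 2 := by
    refine (hF₀ζ.add ((F₀'.isBigO_comp _ _).trans hζ₂) |>.add
      ((isBigO_refl Prod.fst _).smul hF₁ζ |>.congr_right fun q => by simp [sq]))
      |>.congr_left fun q => ?_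
    simp only [map_sub, map_smul]
    module
  exact (isBigO_taylor_of_deriv_sub_isBigO (a := fun h => F₀ z₀ + h • F₁ z₀)
    (b := fun _ => F₀' (F₀ z₀)) hinit hz hrem).comp_tendsto stepFilter.tendsto_diag

end ODE

section Gradient

variable {E : Type*} [NormedAddCommGroup E] [InnerProductSpace ℝ E] [CompleteSpace E]
  {f : E → ℝ} {B : ℝ}

theorem gradient_eq_toDual_symm_comp_fderiv :
    gradient f = (InnerProductSpace.toDual ℝ E).symm ∘ fderiv ℝ f := rfl

theorem ContDiff.gradient {n k : WithTop ℕ∞} (hf : ContDiff ℝ n f) (hk : k + 1 ≤ n) :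
    ContDiff ℝ k (gradient f) := by
  rw [gradient_eq_toDual_symm_comp_fderiv]
  exact (InnerProductSpace.toDual ℝ E).symm.contDiff.comp (hf.fderiv_right hk)

theorem norm_iteratedFDeriv_gradient (k : ℕ) (y : E) :
    ‖iteratedFDeriv ℝ k (gradient f) y‖ = ‖iteratedFDeriv ℝ (k + 1) f y‖ := by
  rw [gradient_eq_toDual_symm_comp_fderiv, LinearIsometryEquiv.norm_iteratedFDeriv_comp_left,
    norm_iteratedFDeriv_fderiv]

theorem norm_fderiv_gradient (y : E) :
    ‖fderiv ℝ (gradient f) y‖ = ‖iteratedFDeriv ℝ 2 f y‖ := by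
  rw [← norm_iteratedFDeriv_one, norm_iteratedFDeriv_gradient]

theorem norm_fderiv_fderiv_gradient (y : E) :
    ‖fderiv ℝ (fderiv ℝ (gradient f)) y‖ = ‖iteratedFDeriv ℝ 3 f y‖ := by
  rw [← norm_iteratedFDeriv_one, norm_iteratedFDeriv_fderiv, norm_iteratedFDeriv_gradient]

theorem differentiable_gradient (hf : ContDiff ℝ 2 f) : Differentiable ℝ (gradient f) :=
  (hf.gradient (k := 1) (by norm_num)).differentiable (by norm_num)

theorem differentiable_fderiv_gradient (hf : ContDiff ℝ 3 f) :
    Differentiable ℝ (fderiv ℝ (gradient f)) :=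
  ((hf.gradient (k := 2) (by norm_num)).fderiv_right (m := 1) (by norm_num)).differentiable
    (by norm_num)

theorem norm_gradient_sub_le (hf : ContDiff ℝ 2 f) (hB : ∀ y, ‖iteratedFDeriv ℝ 2 f y‖ ≤ B)
    (a b : E) : ‖gradient f a - gradient f b‖ ≤ B * ‖a - b‖ :=
  convex_univ.norm_image_sub_le_of_norm_fderiv_le (fun y _ => differentiable_gradient hf y)
    (fun y _ => (norm_fderiv_gradient y).trans_le (hB y)) trivial trivial

theorem norm_fderiv_gradient_sub_le (hf : ContDiff ℝ 3 f)
    (hB : ∀ y, ‖iteratedFDeriv ℝ 3 f y‖ ≤ B) (a b : E) :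
    ‖fderiv ℝ (gradient f) a - fderiv ℝ (gradient f) b‖ ≤ B * ‖a - b‖ :=
  convex_univ.norm_image_sub_le_of_norm_fderiv_le
    (fun y _ => differentiable_fderiv_gradient hf y)
    (fun y _ => (norm_fderiv_fderiv_gradient y).trans_le (hB y)) trivial trivial

theorem norm_gradient_sub_sub_fderiv_le (hf : ContDiff ℝ 3 f)
    (hB : ∀ y, ‖iteratedFDeriv ℝ 3 f y‖ ≤ B) (a b : E) :
    ‖gradient f a - gradient f b - fderiv ℝ (gradient f) b (a - b)‖ ≤ B * ‖a - b‖ ^ 2 := by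
  have hB₀ : 0 ≤ B := (norm_nonneg _).trans (hB b)
  have := (convex_closedBall b ‖a - b‖).norm_image_sub_le_of_norm_fderiv_le'
    (fun y _ => differentiable_gradient (hf.of_le (by norm_num)) y)
    (fun y hy => (norm_fderiv_gradient_sub_le hf hB y b).trans
      (mul_le_mul_of_nonneg_left (mem_closedBall_iff_norm.1 hy) hB₀))
    (Metric.mem_closedBall_self (norm_nonneg _)) (mem_closedBall_iff_norm.2 le_rfl)
  rwa [mul_assoc, ← sq] at this

theorem isBigO_top_gradient_fst (z₀ : E × E) (hf : ContDiff ℝ 2 f)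
    (hB : ∀ y, ‖iteratedFDeriv ℝ 2 f y‖ ≤ B) :
    (fun w : E × E => gradient f w.1) =O[⊤] fun w => 1 + ‖w - z₀‖ :=
  isBigO_top_one_add_norm_sub fun w => (norm_gradient_sub_le hf hB _ _).trans <|
    mul_le_mul_of_nonneg_left (norm_fst_le (w - z₀)) ((norm_nonneg _).trans (hB w.1))

end Gradient

noncomputable section HeavyBall

variable {E : Type*} [NormedAddCommGroup E] [InnerProductSpace ℝ E] [CompleteSpace E]

def heavyBallField (f : E → ℝ) (m γ : ℝ) (w : E × E) : E × E :=
  ((1 / m) • w.2, -gradient f w.1 - γ • w.2)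

def heavyBallFieldDeriv (f : E → ℝ) (m γ : ℝ) (x₀ : E) : E × E →L[ℝ] E × E :=
  ((1 / m) • ContinuousLinearMap.snd ℝ E E).prod
    (-(fderiv ℝ (gradient f) x₀).comp (ContinuousLinearMap.fst ℝ E E) -
      γ • ContinuousLinearMap.snd ℝ E E)

/-- The shadow field is `heavyBallField f m γ + h • shadowCorrection f m γ`. -/
def shadowCorrection (f : E → ℝ) (m γ : ℝ) (w : E × E) : E × E :=
  (-(γ / (2 * m)) • w.2 - (1 / (2 * m)) • gradient f w.1,
    -(γ / 2) • gradient f w.1 + (1 / (2 * m)) • fderiv ℝ (gradient f) w.1 w.2)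

def heavyBallStep (f : E → ℝ) (m γ h : ℝ) (w : E × E) : E × E :=
  (w.1 + (h / m) • (Real.exp (-γ * h) • w.2 - h • gradient f w.1),
    Real.exp (-γ * h) • w.2 - h • gradient f w.1)

variable {f : E → ℝ} {B : ℝ} (m γ : ℝ) (z₀ : E × E)

theorem heavyBallField_sub_sub_deriv_isBigO (hf : ContDiff ℝ 3 f)
    (hB : ∀ y, ‖iteratedFDeriv ℝ 3 f y‖ ≤ B) :
    (fun w => heavyBallField f m γ w - heavyBallField f m γ z₀ -
      heavyBallFieldDeriv f m γ z₀.1 (w - z₀)) =O[𝓝 z₀] fun w => ‖w - z₀‖ ^ 2 := by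
  refine IsBigO.of_bound B (Eventually.of_forall fun w => ?_)
  have hB₀ : 0 ≤ B := (norm_nonneg _).trans (hB z₀.1)
  have hw : heavyBallField f m γ w - heavyBallField f m γ z₀ -
      heavyBallFieldDeriv f m γ z₀.1 (w - z₀) =
      (0, -(gradient f w.1 - gradient f z₀.1 - fderiv ℝ (gradient f) z₀.1 (w.1 - z₀.1))) := by
    ext <;> simp only [heavyBallField, heavyBallFieldDeriv, ContinuousLinearMap.prod_apply,
      sub_apply, neg_apply, smul_apply, ContinuousLinearMap.comp_apply,
      ContinuousLinearMap.coe_fst', ContinuousLinearMap.coe_snd', map_sub, Prod.fst_sub,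
      Prod.snd_sub] <;> module
  rw [hw, norm_prod_le_iff, norm_neg, Real.norm_of_nonneg (by positivity)]
  refine ⟨by rw [norm_zero]; positivity, (norm_gradient_sub_sub_fderiv_le hf hB _ _).trans ?_⟩
  gcongr
  exact norm_fst_le (w - z₀)

theorem heavyBallField_isBigO_top (hf : ContDiff ℝ 2 f)
    (hB : ∀ y, ‖iteratedFDeriv ℝ 2 f y‖ ≤ B) :
    heavyBallField f m γ =O[⊤] fun w => 1 + ‖w - z₀‖ :=
  ((isBigO_top_snd z₀).const_smul_left _).prod_left
    ((isBigO_top_gradient_fst z₀ hf hB).neg_left.sub ((isBigO_top_snd z₀).const_smul_left γ))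

theorem shadowCorrection_isBigO_top (hf : ContDiff ℝ 2 f)
    (hB : ∀ y, ‖iteratedFDeriv ℝ 2 f y‖ ≤ B) :
    shadowCorrection f m γ =O[⊤] fun w => 1 + ‖w - z₀‖ := by
  have hH : (fun w : E × E => fderiv ℝ (gradient f) w.1 w.2) =O[⊤] fun w => 1 + ‖w - z₀‖ :=
    (IsBigO.of_bound B (Eventually.of_forall fun w =>
      ((fderiv ℝ (gradient f) w.1).le_opNorm w.2).trans <| by
        rw [norm_fderiv_gradient]; gcongr; exact hB w.1)).trans (isBigO_top_snd z₀)
  exact (((isBigO_top_snd z₀).const_smul_left _).sub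
    ((isBigO_top_gradient_fst z₀ hf hB).const_smul_left _)).prod_left
    (((isBigO_top_gradient_fst z₀ hf hB).const_smul_left _).add (hH.const_smul_left _))

theorem shadowCorrection_sub_isBigO (hf : ContDiff ℝ 3 f) :
    (fun w => shadowCorrection f m γ w - shadowCorrection f m γ z₀) =O[𝓝 z₀]
      fun w => w - z₀ := by
  have := differentiable_gradient (hf.of_le (by norm_num))
  have := differentiable_fderiv_gradient hf
  have hd : DifferentiableAt ℝ (shadowCorrection f m γ) z₀ := by
    unfold shadowCorrection; fun_prop
  exact hd.hasFDerivAt.isBigO_sub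

theorem heavyBallStep_sub_isBigO :
    (fun h => heavyBallStep f m γ h z₀ - z₀ -
      h • (heavyBallField f m γ z₀ + h • shadowCorrection f m γ z₀) -
      (h ^ 2 / 2) • heavyBallFieldDeriv f m γ z₀.1 (heavyBallField f m γ z₀))
      =O[𝓝 0] fun h => h ^ 3 := by
  have hexp (n : ℕ) :
      (fun h => Real.exp (-γ * h) - ∑ i ∈ Finset.range n, (-γ * h) ^ i / i.factorial)
        =O[𝓝 0] fun h => h ^ n := by
    refine ((Real.exp_sub_sum_range_isBigO_pow n).comp_tendsto ?_).trans ?_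
    · exact (continuous_const_mul (-γ)).tendsto' 0 0 (mul_zero _)
    · simp only [Function.comp_def, mul_pow]
      exact isBigO_const_mul_self _ _ _
  have hdiff : (fun h => heavyBallStep f m γ h z₀ - z₀ -
      h • (heavyBallField f m γ z₀ + h • shadowCorrection f m γ z₀) -
      (h ^ 2 / 2) • heavyBallFieldDeriv f m γ z₀.1 (heavyBallField f m γ z₀)) = fun h =>
      ((1 / m * h * (Real.exp (-γ * h) - ∑ i ∈ Finset.range 2, (-γ * h) ^ i / i.factorial))
          • z₀.2,
        (Real.exp (-γ * h) - ∑ i ∈ Finset.range 3, (-γ * h) ^ i / i.factorial) • z₀.2) := by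
    ext h <;>
    · simp only [heavyBallStep, heavyBallField, shadowCorrection, heavyBallFieldDeriv,
        ContinuousLinearMap.prod_apply, sub_apply, neg_apply, smul_apply,
        ContinuousLinearMap.comp_apply, ContinuousLinearMap.coe_fst', ContinuousLinearMap.coe_snd',
        map_smul, Prod.fst_sub, Prod.snd_sub, Prod.fst_add, Prod.snd_add, Prod.smul_fst,
        Prod.smul_snd, Finset.sum_range_succ, Finset.sum_range_zero, Nat.factorial, Nat.cast_one]
      module
  rw [hdiff]
  refine IsBigO.prod_left ?_ ?_
  · refine (((isBigO_const_mul_self (1 / m) (fun h : ℝ => h) _).mul (hexp 2)).smul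
      (isBigO_const_one ℝ z₀.2 _)).congr_right fun h => ?_
    rw [smul_eq_mul, mul_one, ← pow_succ']
  · refine ((hexp 3).smul (isBigO_const_one ℝ z₀.2 _)).congr_right fun h => ?_
    rw [smul_eq_mul, mul_one]

end HeavyBall

theorem heavyBall_second_order_for_shadow_system_general
    {n : ℕ} (f : EuclideanSpace ℝ (Fin n) → ℝ) (hf : ContDiff ℝ 3 f)
    (B : ℝ)
    (hB : ∀ y, ‖iteratedFDeriv ℝ 2 f y‖ ≤ B ∧ ‖iteratedFDeriv ℝ 3 f y‖ ≤ B)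
    (m γ : ℝ)
    (x₀ p₀ : EuclideanSpace ℝ (Fin n))
    (x p : ℝ → ℝ → EuclideanSpace ℝ (Fin n))
    (hinit : ∀ h > (0 : ℝ), x h 0 = x₀ ∧ p h 0 = p₀)
    (hsol : ∀ h > (0 : ℝ), ∀ t ∈ Set.Icc (0 : ℝ) h,
      HasDerivWithinAt (x h)
        ((1 / m) • p h t - (h * γ / (2 * m)) • p h t - (h / (2 * m)) • gradient f (x h t))
        (Set.Icc 0 h) t
      ∧ HasDerivWithinAt (p h)
        (-(gradient f (x h t)) - γ • p h t - (h * γ / 2) • gradient f (x h t)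
          + (h / (2 * m)) • fderiv ℝ (gradient f) (x h t) (p h t))
        (Set.Icc 0 h) t) :
    ∃ C > 0, ∃ ε > (0 : ℝ), ∀ h ∈ Set.Ioc (0 : ℝ) ε,
      ‖(x₀ + (h / m) • (Real.exp (-γ * h) • p₀ - h • gradient f x₀)) - x h h‖
        + ‖(Real.exp (-γ * h) • p₀ - h • gradient f x₀) - p h h‖
        ≤ C * h ^ 3 := by
  have hf₂ : ContDiff ℝ 2 f := hf.of_le (by norm_num)
  have hz : ∀ h > 0, ∀ t ∈ Icc 0 h, HasDerivWithinAt (fun s => (x h s, p h s))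
      (heavyBallField f m γ (x h t, p h t) + h • shadowCorrection f m γ (x h t, p h t))
      (Icc 0 h) t := fun h hh t ht =>
    ((hsol h hh t ht).1.prodMk (hsol h hh t ht).2).congr_deriv <| by
      refine Prod.ext ?_ ?_ <;> simp only [heavyBallField, shadowCorrection, Prod.fst_add,
        Prod.snd_add, Prod.smul_fst, Prod.smul_snd] <;> module
  have hshadow := ode_solution_sub_taylor_isBigO (z := fun h t => (x h t, p h t))
    (heavyBallField_sub_sub_deriv_isBigO m γ (x₀, p₀) hf fun y => (hB y).2)
    (shadowCorrection_sub_isBigO m γ (x₀, p₀) hf)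
    (heavyBallField_isBigO_top m γ (x₀, p₀) hf₂ fun y => (hB y).1)
    (shadowCorrection_isBigO_top m γ (x₀, p₀) hf₂ fun y => (hB y).1)
    (fun h hh => Prod.ext (hinit h hh).1 (hinit h hh).2) hz
  have hstep := (heavyBallStep_sub_isBigO (f := f) m γ (x₀, p₀)).mono
    (nhdsWithin_le_nhds (s := Ioi 0))
  obtain ⟨c, hc, hc'⟩ := ((hstep.sub hshadow).congr_left fun h => by abel :
    (fun h => heavyBallStep f m γ h (x₀, p₀) - (x h h, p h h)) =O[𝓝[>] 0] _).exists_pos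
  obtain ⟨ε, hε, hbound⟩ := (nhdsGT_basis_Ioc 0).eventually_iff.1 hc'.bound
  refine ⟨2 * c, by positivity, ε, hε, fun h hh => ?_⟩
  have hch := hbound hh
  rw [Real.norm_of_nonneg (pow_nonneg hh.1.le 3)] at hch
  have hx := norm_fst_le (heavyBallStep f m γ h (x₀, p₀) - (x h h, p h h))
  have hp := norm_snd_le (heavyBallStep f m γ h (x₀, p₀) - (x h h, p h h))
  simp only [heavyBallStep, Prod.fst_sub, Prod.snd_sub] at hx hp hch
  linarith

/-- the heavy-ball (classical momentum) method is a second-order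
integrator for its modified (shadow) system
`ẋ = p/m − (hγ/(2m)) p − (h/(2m)) ∇f(x)`,
`ṗ = −∇f(x) − γp − (hγ/2) ∇f(x) + (h/(2m)) ∇²f(x) p`:
the one-step error from a common initial condition is `O(h³)`. -/
theorem heavyBall_second_order_for_shadow_system
    {n : ℕ} (f : EuclideanSpace ℝ (Fin n) → ℝ) (hf : ContDiff ℝ 3 f)
    (B : ℝ)
    (hB : ∀ y, ‖iteratedFDeriv ℝ 2 f y‖ ≤ B ∧ ‖iteratedFDeriv ℝ 3 f y‖ ≤ B)
    (m γ : ℝ) (hm : 0 < m) (hγ : 0 ≤ γ)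
    (x₀ p₀ : EuclideanSpace ℝ (Fin n))
    (x p : ℝ → ℝ → EuclideanSpace ℝ (Fin n))
    (hinit : ∀ h > (0 : ℝ), x h 0 = x₀ ∧ p h 0 = p₀)
    (hsol : ∀ h > (0 : ℝ), ∀ t ∈ Set.Icc (0 : ℝ) h,
      HasDerivWithinAt (x h)
        ((1 / m) • p h t - (h * γ / (2 * m)) • p h t - (h / (2 * m)) • gradient f (x h t))
        (Set.Icc 0 h) t
      ∧ HasDerivWithinAt (p h)
        (-(gradient f (x h t)) - γ • p h t - (h * γ / 2) • gradient f (x h t)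
          + (h / (2 * m)) • fderiv ℝ (gradient f) (x h t) (p h t))
        (Set.Icc 0 h) t) :
    ∃ C > 0, ∃ ε > (0 : ℝ), ∀ h ∈ Set.Ioc (0 : ℝ) ε,
      ‖(x₀ + (h / m) • (Real.exp (-γ * h) • p₀ - h • gradient f x₀)) - x h h‖
        + ‖(Real.exp (-γ * h) • p₀ - h • gradient f x₀) - p h h‖
        ≤ C * h ^ 3 :=
  heavyBall_second_order_for_shadow_system_general f hf B hB m γ x₀ p₀ x p hinit hsol
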